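/- The monogenic inversion J_3, defined on smooth M_k-valued functions by J_3[f](x,u) = (x/‖x‖^{m-2}) f(x/‖x‖², x u x/‖x‖²), is an involution up to sign: J_3² = -1, i.e., J_3[J_3[f]](x,u) = -f(x,u) for all x ≠ 0. -/

import Mathlib

/-- The quadratic form `x ↦ -‖x‖²` on `ℝ^m`, generating the Clifford algebra `Cl_m`. -/
noncomputable def negQ (m : ℕ) : QuadraticForm ℝ (EuclideanSpace ℝ (Fin m)) :=
  -LinearMap.BilinMap.toQuadraticMap (innerₗ (EuclideanSpace ℝ (Fin m)) :
      LinearMap.BilinForm ℝ (EuclideanSpace ℝ (Fin m)))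

/-- The vector `x u x / ‖x‖²` of `ℝ^m`, i.e. `ω u ω` for `ω = x/‖x‖`: the Clifford element
`ι x * ι u * ι x / ‖x‖²` equals `ι (reflMap x u)`. -/
noncomputable def reflMap {m : ℕ} (x u : EuclideanSpace ℝ (Fin m)) :
    EuclideanSpace ℝ (Fin m) :=
  u - ((2 * (inner ℝ u x : ℝ)) / ‖x‖ ^ 2) • x

/-- Monogenic inversion: `J₃[f](x,u) = (x/‖x‖^{m-2}) f(x/‖x‖², x u x/‖x‖²)`. -/
noncomputable def J3 {m : ℕ}
    (f : EuclideanSpace ℝ (Fin m) → EuclideanSpace ℝ (Fin m) → CliffordAlgebra (negQ m)) :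
    EuclideanSpace ℝ (Fin m) → EuclideanSpace ℝ (Fin m) → CliffordAlgebra (negQ m) :=
  fun x u =>
    (‖x‖ ^ ((m : ℤ) - 2))⁻¹ •
      (CliffordAlgebra.ι (negQ m) x * f ((‖x‖ ^ 2)⁻¹ • x) (reflMap x u))

/-! The proof is a direct computation: the sphere inversion `x ↦ x/‖x‖²` and the reflection
`u ↦ x u x/‖x‖²` are involutions, the latter unchanged when `x` is rescaled, so applying `J₃` twice
returns `f(x,u)` multiplied by `‖x‖^{-(m-2)} ‖x‖^{m-2} x (x/‖x‖²)`, and `x (x/‖x‖²) = -1` in `Cl_m`. -/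

section Inversion

variable {E : Type*} [NormedAddCommGroup E] [NormedSpace ℝ E]

lemma norm_inv_norm_sq_smul (x : E) : ‖(‖x‖ ^ 2)⁻¹ • x‖ = ‖x‖⁻¹ := by
  rcases eq_or_ne ‖x‖ 0 with hx | hx
  · simp [hx]
  · rw [norm_smul, norm_inv, norm_pow, norm_norm]
    field_simp

lemma inv_norm_sq_smul_inv_norm_sq_smul (x : E) :
    (‖(‖x‖ ^ 2)⁻¹ • x‖ ^ 2)⁻¹ • (‖x‖ ^ 2)⁻¹ • x = x := by
  rcases eq_or_ne ‖x‖ 0 with hx | hx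
  · simp [norm_eq_zero.mp hx]
  · rw [norm_inv_norm_sq_smul, smul_smul, inv_pow, inv_inv, mul_inv_cancel₀ (by positivity),
      one_smul]

end Inversion

section Reflection

variable {m : ℕ}

lemma reflMap_smul_left (x u : EuclideanSpace ℝ (Fin m)) {c : ℝ} (hc : c ≠ 0) :
    reflMap (c • x) u = reflMap x u := by
  unfold reflMap
  rw [real_inner_smul_right, norm_smul, smul_smul, Real.norm_eq_abs, mul_pow, sq_abs]
  congr 2
  field_simp

lemma reflMap_reflMap (x u : EuclideanSpace ℝ (Fin m)) (hx : x ≠ 0) :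
    reflMap x (reflMap x u) = u := by
  have hn : ‖x‖ ≠ 0 := norm_ne_zero_iff.mpr hx
  unfold reflMap
  rw [inner_sub_left, real_inner_smul_left, real_inner_self_eq_norm_sq]
  have hcoeff : 2 * (inner ℝ u x - 2 * inner ℝ u x / ‖x‖ ^ 2 * ‖x‖ ^ 2) / ‖x‖ ^ 2
      = -(2 * inner ℝ u x / ‖x‖ ^ 2) := by
    field_simp
    ring
  rw [hcoeff]
  module

end Reflection

lemma negQ_apply {m : ℕ} (x : EuclideanSpace ℝ (Fin m)) : negQ m x = -(‖x‖ ^ 2) := by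
  change -inner ℝ x x = _
  rw [real_inner_self_eq_norm_sq]

lemma ι_mul_ι_inv_norm_sq_smul {m : ℕ} (x : EuclideanSpace ℝ (Fin m)) (hx : x ≠ 0) :
    CliffordAlgebra.ι (negQ m) x * CliffordAlgebra.ι (negQ m) ((‖x‖ ^ 2)⁻¹ • x) = -1 := by
  have hn : ‖x‖ ≠ 0 := norm_ne_zero_iff.mpr hx
  rw [map_smul, mul_smul_comm, CliffordAlgebra.ι_sq_scalar, negQ_apply, Algebra.algebraMap_eq_smul_one,
    smul_smul, inv_mul_eq_div, neg_div, div_self (by positivity), neg_smul, one_smul]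

lemma J3_apply_inv_norm_sq_smul {m : ℕ}
    (f : EuclideanSpace ℝ (Fin m) → EuclideanSpace ℝ (Fin m) → CliffordAlgebra (negQ m))
    (x v : EuclideanSpace ℝ (Fin m)) (hx : x ≠ 0) :
    J3 f ((‖x‖ ^ 2)⁻¹ • x) v =
      ‖x‖ ^ ((m : ℤ) - 2) • (CliffordAlgebra.ι (negQ m) ((‖x‖ ^ 2)⁻¹ • x) * f x (reflMap x v)) := by
  have hc : (‖x‖ ^ 2)⁻¹ ≠ 0 := inv_ne_zero (by positivity)
  rw [J3, inv_norm_sq_smul_inv_norm_sq_smul, norm_inv_norm_sq_smul, reflMap_smul_left _ _ hc,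
    inv_zpow, inv_inv]

theorem stmt11_general (m : ℕ)
    (f : EuclideanSpace ℝ (Fin m) → EuclideanSpace ℝ (Fin m) → CliffordAlgebra (negQ m))
    (x u : EuclideanSpace ℝ (Fin m)) (hx : x ≠ 0) :
    J3 (J3 f) x u = -f x u := by
  have hn : ‖x‖ ^ ((m : ℤ) - 2) ≠ 0 := zpow_ne_zero _ (norm_ne_zero_iff.mpr hx)
  rw [J3, J3_apply_inv_norm_sq_smul f x _ hx, reflMap_reflMap x u hx, mul_smul_comm, smul_smul,
    inv_mul_cancel₀ hn, one_smul, ← mul_assoc, ι_mul_ι_inv_norm_sq_smul x hx, neg_one_mul]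

/-- The monogenic inversion `J₃` is an involution up to sign: `J₃² = -1`, i.e.
`J₃[J₃[f]](x,u) = -f(x,u)` for all `x ≠ 0` (here `f(x,·)` is a `k`-homogeneous
polynomial, e.g. monogenic, in `u`). -/
theorem stmt11 (m k : ℕ)
    (f : EuclideanSpace ℝ (Fin m) → EuclideanSpace ℝ (Fin m) → CliffordAlgebra (negQ m))
    (hf : ∀ (x : EuclideanSpace ℝ (Fin m)) (c : ℝ) (u : EuclideanSpace ℝ (Fin m)),
      f x (c • u) = c ^ k • f x u)
    (x u : EuclideanSpace ℝ (Fin m)) (hx : x ≠ 0) :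
    J3 (J3 f) x u = -f x u :=
  stmt11_general m f x u hx
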